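/- Symmetrization of the Coulomb branch (Bethe Ansatz) equations: for integers n ≥ k ≥ 1, the following identity holds in the polynomial ring ℤ[q, z_1,…,z_k, ζ_1,…,ζ_n]: (Π_{i=1}^{n} (z_1 − ζ_i)) · (Π_{b=2}^{k} (1 − z_b)) + (-1)^k q (1 − z_1)^{k−1} Π_{i=1}^{n} (1 − ζ_i) = z_1^n + Σ_{i=0}^{n−1} (-1)^{n−i} z_1^{i} ĝ_{n−i}(z,ζ,q), where ĝ_ℓ(z,ζ,q) := c'_{≥ℓ}(z,ζ) for 1 ≤ ℓ ≤ n−k, and ĝ_ℓ(z,ζ,q) := c'_{≥ℓ}(z,ζ) + (E·C^ζ_{≥n-k+2})_{ℓ−n+k} + (-1)^{n+k} q · binom(k−1, n−ℓ) · c^ζ for n−k+1 ≤ ℓ ≤ n. In particular each ĝ_ℓ is a symmetric polynomial in z_1,…,z_k and in ζ_1,…,ζ_n. -/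

import Mathlib

open Finset MvPolynomial

noncomputable section

/-- The elementary symmetric polynomial `e_r` of a family of ring elements. -/
def esymmF {R : Type*} [CommRing R] {m : ℕ} (f : Fin m → R) (r : ℕ) : R :=
  ∑ t ∈ Finset.powersetCard r Finset.univ, ∏ j ∈ t, f j

variable (k n : ℕ)

/-- The ambient polynomial ring `ℤ[q, z_1,…,z_k, ζ_1,…,ζ_n]`. -/
abbrev QZZeta (k n : ℕ) := MvPolynomial (Unit ⊕ Fin k ⊕ Fin n) ℤ

/-- The quantum variable `q`. -/
def qv (k n : ℕ) : QZZeta k n := X (Sum.inl ())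

/-- The variable `z_i`. -/
def zv (k n : ℕ) (i : Fin k) : QZZeta k n := X (Sum.inr (Sum.inl i))

/-- The variable `ζ_j`. -/
def zetav (k n : ℕ) (j : Fin n) : QZZeta k n := X (Sum.inr (Sum.inr j))

/-- `e_r(z)`. -/
def eZ (r : ℕ) : QZZeta k n := esymmF (zv k n) r

/-- `e_r(ζ)`. -/
def eZeta (r : ℕ) : QZZeta k n := esymmF (zetav k n) r

/-- The truncation `c^z_{≥j} = Σ_{i=j}^{k} (-1)^{i-j} e_i(z)`. -/
def cGeZ (j : ℕ) : QZZeta k n := ∑ i ∈ Finset.Icc j k, (-1) ^ (i - j) * eZ k n i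

/-- The truncation `c^ζ_{≥j} = Σ_{i=j}^{n} (-1)^{i-j} e_i(ζ)`. -/
def cGeZeta (j : ℕ) : QZZeta k n := ∑ i ∈ Finset.Icc j n, (-1) ^ (i - j) * eZeta k n i

/-- `c^ζ = Σ_{i=0}^{n} (-1)^i e_i(ζ) = Π_{i=1}^{n} (1 − ζ_i)`. -/
def cZeta : QZZeta k n := ∑ i ∈ Finset.range (n + 1), (-1) ^ i * eZeta k n i

/-- `c'_{≥ℓ}(z,ζ) = e_ℓ(ζ) + Σ_{m=1}^{k-1} e_{ℓ-m}(ζ) c^z_{≥ m+1}`,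
with the convention `e_s(ζ) = 0` for `s < 0` (i.e. for `m > ℓ`). -/
def cPrimeGe (ℓ : ℕ) : QZZeta k n :=
  eZeta k n ℓ + ∑ m ∈ Finset.Icc 1 (k - 1),
    (if m ≤ ℓ then eZeta k n (ℓ - m) * cGeZ k n (m + 1) else 0)

/-- The `k × k` lower-triangular matrix `E` with `E_{ij} = −e_{i−j}(z)` for `i ≥ j`
and `E_{ij} = 0` for `i < j` (`1`-based indices). -/
def EMat (i j : ℕ) : QZZeta k n := if j ≤ i then -(eZ k n (i - j)) else 0

/-- The `k`-component column vector `C^ζ_{≥n-k+2}`: the `i`-th entry is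
`c^ζ_{≥ n-k+1+i}` for `1 ≤ i ≤ k−1`, and the `k`-th entry is `0`. -/
def CVec (i : ℕ) : QZZeta k n := if i < k then cGeZeta k n (n - k + 1 + i) else 0

/-- The `r`-th component of the product column vector `E·C^ζ_{≥n-k+2}`. -/
def ECVec (r : ℕ) : QZZeta k n := ∑ j ∈ Finset.Icc 1 k, EMat k n r j * CVec k n j

/-- `ĝ_ℓ(z,ζ,q)`: equal to `c'_{≥ℓ}(z,ζ)` for `1 ≤ ℓ ≤ n−k`, and to
`c'_{≥ℓ}(z,ζ) + (E·C^ζ_{≥n-k+2})_{ℓ−n+k} + (-1)^{n+k} q·binom(k−1,n−ℓ)·c^ζ`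
for `n−k+1 ≤ ℓ ≤ n`. -/
def ghat (ℓ : ℕ) : QZZeta k n :=
  if ℓ ≤ n - k then cPrimeGe k n ℓ
  else cPrimeGe k n ℓ + ECVec k n (ℓ + k - n)
    + (-1) ^ (n + k) * qv k n * (Nat.choose (k - 1) (n - ℓ) : QZZeta k n) * cZeta k n

/-!
Write `x = z₁`, `uᵢ = (-1)ⁱ eᵢ(z)` and `v_r = (-1)ʳ e_r(ζ)`. The synthetic-division quotients
`α_p = Σ_{t ≤ p} xᵗ u_{p-t}` of `∏_b (X - z_b)` by `X - x` satisfy `α_k = ∏_b (x - z_b) = 0`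
and `(1 - x) Σ_{p<k} α_p = Σ_{i≤k} uᵢ = ∏_b (1 - z_b)`, so `∏_{b≥2} (1 - z_b) = Σ_{p<k} α_p`.
Since also `∏ᵢ (x - ζᵢ) = Σ_r v_r x^{n-r}`, the `c'`-part of the right-hand side telescopes to
`∏ᵢ (x - ζᵢ) ∏_{b≥2} (1 - z_b)` up to an `x`-free correction, while the `E·C` part collapses
through the same quotients `α_p` to an `x`-free sum that, after an interchange of summation, is
that correction. The `q`-part is the binomial expansion of `(1 - x)^{k-1}`. Every `ĝ_ℓ` is a
polynomial in `q`, the `eᵢ(z)` and the `e_r(ζ)`, hence symmetric.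
-/

lemma neg_one_pow_sub_eq_mul {R : Type*} [Monoid R] [HasDistribNeg R] {i j : ℕ} (h : j ≤ i) :
    (-1 : R) ^ (i - j) = (-1) ^ j * (-1) ^ i := by
  rw [← pow_add]
  exact neg_one_pow_congr (by simp only [Nat.even_iff]; omega)

lemma sum_range_ite_lt {M : Type*} [AddCommMonoid M] (f : ℕ → M) {s N : ℕ} (h : s ≤ N) :
    ∑ t ∈ range N, (if t < s then f t else 0) = ∑ t ∈ range s, f t := by
  rw [← sum_filter]
  congr 1
  ext t
  simp only [mem_filter, mem_range]
  omega

section Horner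

variable {R : Type*} [CommRing R]

def hornerSum (c : ℕ → R) (x : R) (s : ℕ) : R := ∑ t ∈ range (s + 1), x ^ t * c (s - t)

variable (x : R) (u v : ℕ → R)

lemma hornerSum_zero : hornerSum u x 0 = u 0 := by
  simp [hornerSum]

lemma hornerSum_succ (s : ℕ) : hornerSum u x (s + 1) = u (s + 1) + x * hornerSum u x s := by
  rw [hornerSum, sum_range_succ', hornerSum, mul_sum]
  simp only [pow_zero, one_mul, Nat.sub_zero, pow_succ', mul_assoc, Nat.add_sub_add_right]
  ring

lemma hornerSum_eq_sum (s : ℕ) : hornerSum u x s = ∑ r ∈ range (s + 1), u r * x ^ (s - r) := by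
  rw [hornerSum, ← sum_range_reflect]
  refine sum_congr rfl fun r hr => ?_
  rw [mem_range] at hr
  rw [mul_comm, show s - (s + 1 - 1 - r) = r by omega, Nat.add_sub_cancel]

lemma sum_range_succ_eq_hornerSum_add (s : ℕ) :
    ∑ i ∈ range (s + 1), u i = hornerSum u x s + (1 - x) * ∑ i ∈ range s, hornerSum u x i := by
  induction s with
  | zero => simp [hornerSum_zero]
  | succ s ih =>
    rw [sum_range_succ, ih, hornerSum_succ, sum_range_succ]
    ring

lemma sum_pow_mul_sum_ite_eq_sum_hornerSum {ι : Type*} (M : Finset ι) (p : ι → ℕ) (g : ι → R)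
    {N : ℕ} (hp : ∀ m ∈ M, p m < N) :
    ∑ t ∈ range N, x ^ t * ∑ m ∈ M, (if t ≤ p m then u (p m - t) * g m else 0)
      = ∑ m ∈ M, hornerSum u x (p m) * g m := by
  simp_rw [mul_sum, mul_ite, mul_zero, ← Nat.lt_add_one_iff]
  rw [sum_comm]
  refine sum_congr rfl fun m hm => ?_
  rw [sum_range_ite_lt _ (hp m hm), hornerSum, sum_mul]
  simp_rw [mul_assoc]

lemma sum_Icc_succ_eq_sub_add_hornerSum {K m : ℕ} (hm : m < K) :
    ∑ i ∈ Icc (m + 1) K, u i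
      = ∑ i ∈ Ico (m + 1) K, hornerSum u x i - x * ∑ i ∈ Ico m K, hornerSum u x i
        + hornerSum u x K := by
  have hshift : ∑ i ∈ Icc (m + 1) K, u i = ∑ i ∈ Ico m K, u (i + 1) := by
    rw [sum_Ico_add', Ico_add_one_right_eq_Icc]
  have hsucc : ∀ i, u (i + 1) = hornerSum u x (i + 1) - x * hornerSum u x i := fun i => by
    rw [hornerSum_succ]; ring
  simp_rw [hshift, hsucc, sum_sub_distrib, ← mul_sum, sum_Ico_add' (fun i => hornerSum u x i),
    sum_Ico_succ_top (show m + 1 ≤ K by omega)]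
  ring

lemma sum_Ico_sub_mul_hornerSum (A : ℕ → R) {K n : ℕ} (hK : 1 ≤ K) (hKn : K ≤ n + 1)
    (hA : A K = 0) :
    ∑ m ∈ Ico 1 K, (A (m + 1) - x * A m) * hornerSum v x (n - m)
      = ∑ m ∈ Ico 1 K, A m * v (n + 1 - m) - A 1 * hornerSum v x n := by
  have hterm : ∀ m ∈ Ico 1 K, (A (m + 1) - x * A m) * hornerSum v x (n - m)
      = (A (m + 1) * hornerSum v x (n + 1 - (m + 1)) - A m * hornerSum v x (n + 1 - m))
        + A m * v (n + 1 - m) := by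
    intro m hm
    rw [mem_Ico] at hm
    rw [Nat.add_sub_add_right, show n + 1 - m = n - m + 1 by omega, hornerSum_succ]
    ring
  rw [sum_congr rfl hterm, sum_add_distrib,
    sum_Ico_sub (fun i => A i * hornerSum v x (n + 1 - i)) hK, hA]
  simp only [zero_mul, zero_sub, Nat.add_sub_cancel]
  ring

lemma sum_mul_sum_Icc_eq_sum_Ico (α : ℕ → R) {K n : ℕ} (hKn : K ≤ n + 1) :
    ∑ p ∈ range K, α p * ∑ r ∈ Icc (n + 1 - p) n, v r
      = ∑ m ∈ Ico 1 K, (∑ i ∈ Ico m K, α i) * v (n + 1 - m) := by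
  have hreflect : ∀ p ∈ range K, ∑ r ∈ Icc (n + 1 - p) n, v r = ∑ m ∈ Icc 1 p, v (n + 1 - m) := by
    intro p hp
    rw [mem_range] at hp
    refine sum_nbij' (fun r => n + 1 - r) (fun m => n + 1 - m) ?_ ?_ ?_ ?_ ?_
      <;> intro r hr <;> simp only [mem_Icc] at hr ⊢ <;> first | omega | (congr 1; omega)
  rw [sum_congr rfl fun p hp => by rw [hreflect p hp, mul_sum]]
  rw [sum_comm' (t' := Ico 1 K) (s' := fun m => Ico m K)
    (by intro p m; simp only [mem_range, mem_Icc, mem_Ico]; omega)]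
  simp_rw [sum_mul]

theorem hornerSum_mul_sum_hornerSum_eq {K n : ℕ} (hK : 1 ≤ K) (hKn : K ≤ n) (hu0 : u 0 = 1)
    (huK : hornerSum u x K = 0) :
    hornerSum v x n * ∑ i ∈ range K, hornerSum u x i
      = ∑ t ∈ range (n + 1), x ^ t * (v (n - t) - ∑ m ∈ Ico 1 K,
        (if m ≤ n - t then v (n - t - m) * ∑ i ∈ Icc (m + 1) K, u i else 0))
      + ∑ t ∈ range K, x ^ t * ∑ p ∈ range K,
          (if t ≤ p then u (p - t) * ∑ r ∈ Icc (n + 1 - p) n, v r else 0) := by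
  set A : ℕ → R := fun j => ∑ i ∈ Ico j K, hornerSum u x i with hA
  have hcPrime : ∑ t ∈ range (n + 1), x ^ t * ∑ m ∈ Ico 1 K,
        (if m ≤ n - t then v (n - t - m) * ∑ i ∈ Icc (m + 1) K, u i else 0)
      = ∑ m ∈ Ico 1 K, (A (m + 1) - x * A m) * hornerSum v x (n - m) := by
    refine Eq.trans ?_ ((sum_pow_mul_sum_ite_eq_sum_hornerSum x v (Ico 1 K) (fun m => n - m)
      (fun m => ∑ i ∈ Icc (m + 1) K, u i) (N := n + 1) (fun m hm => by omega)).trans ?_)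
    · refine sum_congr rfl fun t ht => congrArg _ (sum_congr rfl fun m hm => ?_)
      simp only [mem_range, mem_Ico] at ht hm
      rw [Nat.sub_right_comm]
      exact if_congr (by omega) rfl rfl
    · refine sum_congr rfl fun m hm => ?_
      rw [sum_Icc_succ_eq_sub_add_hornerSum x u (mem_Ico.mp hm).2, huK, add_zero, mul_comm]
  have hEC : ∑ t ∈ range K, x ^ t * ∑ p ∈ range K,
          (if t ≤ p then u (p - t) * ∑ r ∈ Icc (n + 1 - p) n, v r else 0)
      = ∑ m ∈ Ico 1 K, A m * v (n + 1 - m) :=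
    (sum_pow_mul_sum_ite_eq_sum_hornerSum x u (range K) (fun p => p) _
      (fun p hp => mem_range.mp hp)).trans (sum_mul_sum_Icc_eq_sum_Ico v _ (by omega))
  have hA0 : ∑ i ∈ range K, hornerSum u x i = 1 + A 1 := by
    rw [range_eq_Ico, sum_eq_sum_Ico_succ_bot hK, hornerSum_zero, hu0]
  simp_rw [mul_sub, sum_sub_distrib]
  rw [hcPrime, hEC, sum_Ico_sub_mul_hornerSum x v A hK (by omega) (by simp [hA]), hA0, hornerSum]
  ring

end Horner

section Esymm

variable {R : Type*} [CommRing R] {m : ℕ}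

lemma esymmF_zero (f : Fin m → R) : esymmF f 0 = 1 := by
  simp [esymmF]

lemma map_esymmF {S F : Type*} [CommRing S] [FunLike F R S] [RingHomClass F R S] (φ : F)
    (f : Fin m → R) (r : ℕ) : φ (esymmF f r) = esymmF (φ ∘ f) r := by
  simp [esymmF, map_sum, map_prod]

lemma esymmF_comp_perm (f : Fin m → R) (π : Equiv.Perm (Fin m)) (r : ℕ) :
    esymmF (f ∘ π) r = esymmF f r := by
  conv_rhs => rw [esymmF, ← map_univ_equiv π, powersetCard_map, sum_map]
  simp [esymmF, prod_map]

lemma prod_sub_eq_sum_esymmF (f : Fin m → R) (x : R) :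
    ∏ i, (x - f i) = ∑ r ∈ range (m + 1), (-1) ^ r * esymmF f r * x ^ (m - r) := by
  have := congrArg (Polynomial.eval x) (Multiset.prod_X_sub_X_eq_sum_esymm (univ.val.map f))
  simp only [Polynomial.eval_multiset_prod, Multiset.map_map, Function.comp_def,
    Polynomial.eval_sub, Polynomial.eval_X, Polynomial.eval_C, Polynomial.eval_finsetSum,
    Polynomial.eval_mul, Polynomial.eval_pow, Polynomial.eval_neg, Polynomial.eval_one,
    Multiset.card_map, card_val, card_univ, Fintype.card_fin, esymm_map_val] at this
  rw [prod_eq_multiset_prod, this]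
  simp only [esymmF, mul_assoc]

lemma prod_sub_eq_hornerSum (f : Fin m → R) (x : R) :
    ∏ i, (x - f i) = hornerSum (fun r => (-1) ^ r * esymmF f r) x m := by
  rw [prod_sub_eq_sum_esymmF, hornerSum_eq_sum]

lemma hornerSum_esymmF_apply_eq_zero (f : Fin m → R) (j : Fin m) :
    hornerSum (fun r => (-1) ^ r * esymmF f r) (f j) m = 0 := by
  rw [← prod_sub_eq_hornerSum]
  exact prod_eq_zero (mem_univ j) (sub_self _)

lemma prod_erase_one_sub_eq_sum_hornerSum [IsDomain R] (f : Fin m → R) (j : Fin m)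
    (hj : 1 - f j ≠ 0) :
    ∏ i ∈ univ.erase j, (1 - f i)
      = ∑ i ∈ range m, hornerSum (fun r => (-1) ^ r * esymmF f r) (f j) i := by
  apply mul_left_cancel₀ hj
  rw [mul_prod_erase _ (fun i => 1 - f i) (mem_univ j), prod_sub_eq_sum_esymmF]
  simpa [hornerSum_esymmF_apply_eq_zero] using
    sum_range_succ_eq_hornerSum_add (f j) (fun r => (-1) ^ r * esymmF f r) m

end Esymm

def eZSigned (i : ℕ) : QZZeta k n := (-1) ^ i * eZ k n i

def eZetaSigned (r : ℕ) : QZZeta k n := (-1) ^ r * eZeta k n r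

lemma cGeZ_eq (j : ℕ) : cGeZ k n j = (-1) ^ j * ∑ i ∈ Icc j k, eZSigned k n i := by
  rw [cGeZ, mul_sum]
  refine sum_congr rfl fun i hi => ?_
  rw [neg_one_pow_sub_eq_mul (mem_Icc.mp hi).1, eZSigned]
  ring

lemma cGeZeta_eq (j : ℕ) : cGeZeta k n j = (-1) ^ j * ∑ r ∈ Icc j n, eZetaSigned k n r := by
  rw [cGeZeta, mul_sum]
  refine sum_congr rfl fun r hr => ?_
  rw [neg_one_pow_sub_eq_mul (mem_Icc.mp hr).1, eZetaSigned]
  ring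

lemma neg_one_pow_mul_cPrimeGe (ℓ : ℕ) :
    (-1) ^ ℓ * cPrimeGe k n ℓ = eZetaSigned k n ℓ - ∑ m ∈ Ico 1 k,
      (if m ≤ ℓ then eZetaSigned k n (ℓ - m) * ∑ i ∈ Icc (m + 1) k, eZSigned k n i else 0) := by
  rw [cPrimeGe, show Icc 1 (k - 1) = Ico 1 k by ext; simp only [mem_Icc, mem_Ico]; omega,
    mul_add, mul_sum, sub_eq_add_neg, ← sum_neg_distrib, eZetaSigned]
  congr 1
  refine sum_congr rfl fun m _ => ?_
  split_ifs with hm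
  · rw [cGeZ_eq, eZetaSigned, neg_one_pow_sub_eq_mul hm]
    ring
  · simp

lemma neg_one_pow_mul_ECVec (hkn : k ≤ n) {t : ℕ} (ht : t < k) :
    (-1) ^ (n - t) * ECVec k n (k - t) = ∑ p ∈ range k,
      (if t ≤ p then eZSigned k n (p - t) * ∑ r ∈ Icc (n + 1 - p) n, eZetaSigned k n r else 0) := by
  have hreflect :
      ECVec k n (k - t) = ∑ p ∈ range k, EMat k n (k - t) (k - p) * CVec k n (k - p) := by
    refine sum_nbij' (fun j => k - j) (fun p => k - p) ?_ ?_ ?_ ?_ ?_ <;> intro j hj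
      <;> simp only [mem_Icc, mem_range] at hj ⊢ <;> first | omega | (congr <;> omega)
  rw [hreflect, mul_sum]
  refine sum_congr rfl fun p hp => ?_
  rw [mem_range] at hp
  by_cases htp : t ≤ p
  · rw [EMat, if_pos (by omega), if_pos htp, show k - t - (k - p) = p - t by omega, eZSigned]
    rcases Nat.eq_zero_or_pos p with rfl | hp0
    · -- the `k`-th entry of `C` is `0`, as is the empty sum over `Icc (n + 1) n`
      simp [CVec]
    rw [CVec, if_pos (by omega), show n - k + 1 + (k - p) = n + 1 - p by omega, cGeZeta_eq,
      neg_one_pow_sub_eq_mul htp]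
    have hsign : (-1 : QZZeta k n) ^ (n - t) * (-1) ^ (n + 1 - p) = -((-1) ^ t * (-1) ^ p) := by
      rw [← pow_add, ← pow_add, ← neg_one_mul ((-1 : QZZeta k n) ^ (t + p)), ← pow_succ']
      exact neg_one_pow_congr (by simp only [Nat.even_iff]; omega)
    linear_combination -(eZ k n (p - t) * ∑ r ∈ Icc (n + 1 - p) n, eZetaSigned k n r) * hsign
  · rw [EMat, if_neg (by omega), if_neg htp]
    simp

lemma ghat_zero : ghat k n 0 = 1 := by
  simp [ghat, cPrimeGe, eZeta, esymmF_zero]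

lemma neg_one_pow_mul_ghat (hkn : k ≤ n) {t : ℕ} (ht : t ≤ n) :
    (-1) ^ (n - t) * ghat k n (n - t)
      = (eZetaSigned k n (n - t) - ∑ m ∈ Ico 1 k, (if m ≤ n - t then
          eZetaSigned k n (n - t - m) * ∑ i ∈ Icc (m + 1) k, eZSigned k n i else 0))
        + if t < k then ∑ p ∈ range k, (if t ≤ p then
            eZSigned k n (p - t) * ∑ r ∈ Icc (n + 1 - p) n, eZetaSigned k n r else 0)
          + (-1) ^ k * qv k n * ((-1) ^ t * (Nat.choose (k - 1) t : QZZeta k n)) * cZeta k n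
        else 0 := by
  rw [← neg_one_pow_mul_cPrimeGe, ghat]
  split_ifs with h₁ h₂ h₂
  · omega
  · simp
  · rw [← neg_one_pow_mul_ECVec k n hkn h₂, show n - t + k - n = k - t by omega,
      show n - (n - t) = t by omega]
    have hsign : (-1 : QZZeta k n) ^ (n - t) * (-1) ^ (n + k) = (-1) ^ k * (-1) ^ t := by
      rw [← pow_add, ← pow_add]
      exact neg_one_pow_congr (by simp only [Nat.even_iff]; omega)
    linear_combination (qv k n * (Nat.choose (k - 1) t : QZZeta k n) * cZeta k n) * hsign
  · omega

lemma sum_neg_one_pow_mul_ghat (hk : 1 ≤ k) (hkn : k ≤ n) (x : QZZeta k n) :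
    x ^ n + ∑ i ∈ range n, (-1) ^ (n - i) * x ^ i * ghat k n (n - i)
      = ∑ t ∈ range (n + 1), x ^ t * (eZetaSigned k n (n - t) - ∑ m ∈ Ico 1 k,
          (if m ≤ n - t then eZetaSigned k n (n - t - m) * ∑ i ∈ Icc (m + 1) k, eZSigned k n i
            else 0))
        + ∑ t ∈ range k, x ^ t * ∑ p ∈ range k, (if t ≤ p then
            eZSigned k n (p - t) * ∑ r ∈ Icc (n + 1 - p) n, eZetaSigned k n r else 0)
        + (-1) ^ k * qv k n * (1 - x) ^ (k - 1) * cZeta k n := by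
  have hfull : x ^ n + ∑ i ∈ range n, (-1) ^ (n - i) * x ^ i * ghat k n (n - i)
      = ∑ t ∈ range (n + 1), x ^ t * ((-1) ^ (n - t) * ghat k n (n - t)) := by
    rw [sum_range_succ, Nat.sub_self, ghat_zero, pow_zero, one_mul, mul_one, add_comm]
    exact congrArg (· + x ^ n) (sum_congr rfl fun i _ => by ring)
  have hbinom : (1 - x) ^ (k - 1)
      = ∑ t ∈ range k, x ^ t * ((-1) ^ t * (Nat.choose (k - 1) t : QZZeta k n)) := by
    rw [← neg_add_eq_sub, add_pow, Nat.sub_add_cancel hk]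
    exact sum_congr rfl fun t _ => by rw [one_pow, mul_one, neg_pow]; ring
  rw [hfull, sum_congr rfl fun t ht => by
    rw [neg_one_pow_mul_ghat k n hkn (Nat.lt_succ_iff.mp (mem_range.mp ht))]]
  simp_rw [mul_add, mul_ite, mul_zero, sum_add_distrib]
  rw [sum_range_ite_lt _ (by omega), add_assoc, hbinom, mul_sum, sum_mul, ← sum_add_distrib]
  congr 1
  exact sum_congr rfl fun t _ => by ring

lemma prod_sub_zetav (x : QZZeta k n) :
    ∏ i, (x - zetav k n i) = hornerSum (eZetaSigned k n) x n :=
  prod_sub_eq_hornerSum (zetav k n) x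

lemma prod_one_sub_zetav : ∏ i, (1 - zetav k n i) = cZeta k n := by
  simp [prod_sub_eq_sum_esymmF, cZeta, eZeta]

lemma prod_filter_one_sub_zv (hk : 1 ≤ k) :
    ∏ b ∈ univ.filter (fun b : Fin k => 0 < b.val), (1 - zv k n b)
      = ∑ i ∈ range k, hornerSum (eZSigned k n) (zv k n ⟨0, hk⟩) i := by
  have hfilter : univ.filter (fun b : Fin k => 0 < b.val) = univ.erase ⟨0, hk⟩ := by
    ext b
    simp [Fin.ext_iff, Nat.pos_iff_ne_zero]
  have hne : 1 - zv k n ⟨0, hk⟩ ≠ 0 := fun h => by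
    simpa [zv] using congrArg (MvPolynomial.eval 0) h
  rw [hfilter]
  exact prod_erase_one_sub_eq_sum_hornerSum (zv k n) _ hne

section Symmetry

variable {k n} (π : Equiv.Perm (Fin k)) (τ : Equiv.Perm (Fin n))

lemma rename_eZ (r : ℕ) : rename (Sum.map id (Sum.map π τ)) (eZ k n r) = eZ k n r := by
  rw [eZ, map_esymmF, ← esymmF_comp_perm (zv k n) π]
  congr 1
  ext i
  simp [zv]

lemma rename_eZeta (r : ℕ) : rename (Sum.map id (Sum.map π τ)) (eZeta k n r) = eZeta k n r := by
  rw [eZeta, map_esymmF, ← esymmF_comp_perm (zetav k n) τ]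
  congr 1
  ext i
  simp [zetav]

lemma rename_ghat (ℓ : ℕ) : rename (Sum.map id (Sum.map π τ)) (ghat k n ℓ) = ghat k n ℓ := by
  rw [ghat]
  split_ifs <;>
    simp [cPrimeGe, ECVec, EMat, CVec, cGeZ, cGeZeta, cZeta, qv, apply_ite, rename_eZ, rename_eZeta]

end Symmetry

/-- Symmetrization of the Coulomb branch (Bethe Ansatz) equations: for `n ≥ k ≥ 1`,
`(Π_{i=1}^{n} (z_1 − ζ_i)) (Π_{b=2}^{k} (1 − z_b)) + (-1)^k q (1−z_1)^{k−1} Π_{i=1}^{n} (1 − ζ_i)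
 = z_1^n + Σ_{i=0}^{n−1} (-1)^{n−i} z_1^i ĝ_{n−i}(z,ζ,q)`,
and each `ĝ_ℓ` (`1 ≤ ℓ ≤ n`) is a symmetric polynomial in the `z`-variables and
in the `ζ`-variables. -/
theorem coulomb_symmetrization (n k : ℕ) (hk : 1 ≤ k) (hkn : k ≤ n) :
    ((∏ i : Fin n, (zv k n (⟨0, hk⟩ : Fin k) - zetav k n i))
        * ∏ b ∈ Finset.univ.filter (fun b : Fin k => 0 < b.val), (1 - zv k n b))
      + (-1) ^ k * qv k n * (1 - zv k n (⟨0, hk⟩ : Fin k)) ^ (k - 1)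
          * ∏ i : Fin n, (1 - zetav k n i)
      = zv k n (⟨0, hk⟩ : Fin k) ^ n
        + ∑ i ∈ Finset.range n,
            (-1) ^ (n - i) * zv k n (⟨0, hk⟩ : Fin k) ^ i * ghat k n (n - i)
    ∧ ∀ ℓ, 1 ≤ ℓ → ℓ ≤ n → ∀ (π : Equiv.Perm (Fin k)) (τ : Equiv.Perm (Fin n)),
        MvPolynomial.rename (Sum.map id (Sum.map π τ)) (ghat k n ℓ) = ghat k n ℓ := by
  refine ⟨?_, fun ℓ _ _ π τ => rename_ghat π τ ℓ⟩
  rw [prod_sub_zetav, prod_filter_one_sub_zv k n hk, prod_one_sub_zetav,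
    sum_neg_one_pow_mul_ghat k n hk hkn, ← hornerSum_mul_sum_hornerSum_eq _ (eZSigned k n)
      (eZetaSigned k n) hk hkn (by simp [eZSigned, eZ, esymmF_zero])
      (hornerSum_esymmF_apply_eq_zero (zv k n) _)]

end
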